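/- Fix n ≥ 1 and s ∈ ℂ, and let V be the sl_{n+1}(ℂ)-module with basis {v_c : c ∈ ℂ^{n+1}, c_1 + ⋯ + c_{n+1} = s} and action E_{ij}·v_c = c_j · v_{c + e_i − e_j} for i ≠ j and H·v_c = (Σ_i h_i c_i) · v_c for traceless diagonal H = diag(h_1,…,h_{n+1}). Let u be an element of U(sl_{n+1}(ℂ)) lying in the centralizer of the Cartan subalgebra h of traceless diagonal matrices (i.e. H·u = u·H in U(sl_{n+1}(ℂ)) for all H ∈ h). Then there exists a polynomial P_u ∈ ℂ[X_1,…,X_{n+1}] such that u·v_c = P_u(c_1,…,c_{n+1}) · v_c for every admissible c. In particular, every weight space of V is u-stable and the trace of u on each (one-dimensional) weight space depends polynomially on the weight, so V is a coherent family of degree 1 in the sense of Mathieu. -/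

import Mathlib

attribute [local instance] LieRing.ofAssociativeRing

namespace Paper

open LieAlgebra.SpecialLinear

/-- The index set: tuples `c ∈ ℂ^{n+1}` with `c_1 + ⋯ + c_{n+1} = s`. -/
def Idx (n : ℕ) (s : ℂ) : Type := {c : Fin (n + 1) → ℂ // ∑ i, c i = s}

/-- The vector space `V` with basis `{v_c}` indexed by `Idx n s`. -/
abbrev Vmod (n : ℕ) (s : ℂ) : Type := Idx n s →₀ ℂ

/-- The basis vector `v_c`. -/
noncomputable def basisVec {n : ℕ} {s : ℂ} (c : Idx n s) : Vmod n s :=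
  Finsupp.single c 1

/-- The shifted index `c + e_i − e_j`. -/
def shiftIdx {n : ℕ} {s : ℂ} (i j : Fin (n + 1)) (c : Idx n s) : Idx n s :=
  ⟨fun k => c.1 k + (if k = i then 1 else 0) - (if k = j then 1 else 0), by
    have hc := c.2
    simp [Finset.sum_add_distrib, Finset.sum_sub_distrib, hc]⟩

/-- The elementary matrix `E_{ij}` (with `i ≠ j`) as an element of `sl_{n+1}(ℂ)`. -/
def Eelt (n : ℕ) (i j : Fin (n + 1)) (h : i ≠ j) : sl (Fin (n + 1)) ℂ :=
  single i j h (1 : ℂ)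

/-- A traceless diagonal matrix `diag(d)` as an element of `sl_{n+1}(ℂ)`. -/
def Delt (n : ℕ) (d : Fin (n + 1) → ℂ) (hd : ∑ i, d i = 0) : sl (Fin (n + 1)) ℂ :=
  ⟨Matrix.diagonal d, show Matrix.diagonal d ∈ LinearMap.ker (Matrix.traceLinearMap _ ℂ ℂ) by
    simp [LinearMap.mem_ker, Matrix.trace_diagonal, hd]⟩

/-- The defining formulas for the action of `sl_{n+1}(ℂ)` on `V`:
`E_{ij} · v_c = c_j · v_{c + e_i − e_j}` for `i ≠ j`, and
`diag(h) · v_c = (Σ_i h_i c_i) · v_c` for traceless diagonal matrices. -/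
def HasDefiningAction (n : ℕ) (s : ℂ)
    (ρ : sl (Fin (n + 1)) ℂ →ₗ⁅ℂ⁆ Module.End ℂ (Vmod n s)) : Prop :=
  (∀ (i j : Fin (n + 1)) (h : i ≠ j) (c : Idx n s),
    ρ (Eelt n i j h) (basisVec c) = c.1 j • basisVec (shiftIdx i j c)) ∧
  (∀ (d : Fin (n + 1) → ℂ) (hd : ∑ i, d i = 0) (c : Idx n s),
    ρ (Delt n d hd) (basisVec c) = (∑ i, d i * c.1 i) • basisVec c)

end Paper

namespace Paper10
open Paper MvPolynomial LieAlgebra.SpecialLinear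

lemma eval_bind₁' {σ : Type*} [Fintype σ] (x : σ → ℂ) (f : σ → MvPolynomial σ ℂ)
    (p : MvPolynomial σ ℂ) :
    eval x (bind₁ f p) = eval (fun i => eval x (f i)) p := by
  have h := aeval_bind₁ (R := ℂ) (S := ℂ) x f p
  have e : ∀ (y : σ → ℂ) (q : MvPolynomial σ ℂ), aeval y q = eval y q := fun y q => by
    rw [← coe_aeval_eq_eval]; rfl
  rw [e, e] at h
  rw [h]
  exact congrArg (fun y => eval y p) (funext fun i => e x (f i))

variable {n : ℕ} {s : ℂ}

noncomputable def cshift (μ : Fin (n+1) → ℤ) (c : Idx n s) : Idx n s :=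
  if h : ∑ i, μ i = 0 then
    ⟨fun k => c.1 k + (μ k : ℂ), by
      have hc := c.2
      have h2 : (↑(∑ i, μ i) : ℂ) = 0 := by rw [h]; simp
      push_cast at h2
      rw [Finset.sum_add_distrib, hc, h2, add_zero]⟩
  else c

lemma cshift_coe (μ : Fin (n+1) → ℤ) (hμ : ∑ i, μ i = 0) (c : Idx n s) :
    (cshift μ c).1 = fun k => c.1 k + (μ k : ℂ) := by
  exact congrArg Subtype.val (show cshift μ c = _ from dif_pos hμ)

lemma cshift_zero (c : Idx n s) : cshift 0 c = c := by
  have h : ∑ i : Fin (n+1), (0 : Fin (n+1) → ℤ) i = 0 := by simp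
  apply Subtype.ext
  rw [cshift_coe _ h]
  funext k; simp

lemma cshift_comp (μ ν : Fin (n+1) → ℤ) (hμ : ∑ i, μ i = 0) (hν : ∑ i, ν i = 0)
    (c : Idx n s) : cshift μ (cshift ν c) = cshift (μ + ν) c := by
  have hμν : ∑ i, (μ + ν) i = 0 := by
    simp [Finset.sum_add_distrib, hμ, hν]
  apply Subtype.ext
  rw [cshift_coe _ hμ, cshift_coe _ hν, cshift_coe _ hμν]
  funext k; simp only [Pi.add_apply]; push_cast; ring

lemma cshift_inj (μ ν : Fin (n+1) → ℤ) (hμ : ∑ i, μ i = 0) (hν : ∑ i, ν i = 0)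
    (c : Idx n s) (h : cshift μ c = cshift ν c) : μ = ν := by
  have := congrArg Subtype.val h
  rw [cshift_coe _ hμ, cshift_coe _ hν] at this
  funext k
  have hk := congrFun this k
  simp only [add_right_inj] at hk
  exact_mod_cast hk

def Good (n : ℕ) (s : ℂ) (f : Module.End ℂ (Vmod n s)) : Prop :=
  ∃ (m : ℕ) (μ : Fin m → (Fin (n+1) → ℤ)) (P : Fin m → MvPolynomial (Fin (n+1)) ℂ),
    (∀ k, ∑ i, μ k i = 0) ∧
    ∀ c : Idx n s, f (basisVec c) =
      ∑ k, (MvPolynomial.eval c.1 (P k)) • basisVec (cshift (μ k) c)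

lemma good_zero : Good n s 0 := by
  refine ⟨0, fun k => 0, fun k => 0, fun k => by simp, fun c => by simp⟩

lemma good_algebraMap (a : ℂ) : Good n s (algebraMap ℂ _ a) := by
  refine ⟨1, fun _ => 0, fun _ => C a, fun k => by simp, fun c => by
    simp [Module.algebraMap_end_apply, cshift_zero]⟩

lemma good_add {f g : Module.End ℂ (Vmod n s)} (hf : Good n s f) (hg : Good n s g) :
    Good n s (f + g) := by
  obtain ⟨m₁, μ₁, P₁, hs₁, h₁⟩ := hf
  obtain ⟨m₂, μ₂, P₂, hs₂, h₂⟩ := hg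
  refine ⟨m₁ + m₂, Fin.append μ₁ μ₂, Fin.append P₁ P₂, ?_, ?_⟩
  · intro k
    induction k using Fin.addCases with
    | left k => rw [Fin.append_left]; exact hs₁ k
    | right k => rw [Fin.append_right]; exact hs₂ k
  · intro c
    rw [LinearMap.add_apply, h₁ c, h₂ c, Fin.sum_univ_add]
    congr 1
    · apply Finset.sum_congr rfl; intro k _
      rw [Fin.append_left, Fin.append_left]
    · apply Finset.sum_congr rfl; intro k _
      rw [Fin.append_right, Fin.append_right]

lemma good_smul (a : ℂ) {f : Module.End ℂ (Vmod n s)} (hf : Good n s f) :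
    Good n s (a • f) := by
  obtain ⟨m, μ, P, hs, h⟩ := hf
  refine ⟨m, μ, fun k => C a * P k, hs, fun c => ?_⟩
  rw [LinearMap.smul_apply, h c, Finset.smul_sum]
  apply Finset.sum_congr rfl; intro k _
  simp [smul_smul]

lemma good_sum {ι : Type*} (t : Finset ι) (F : ι → Module.End ℂ (Vmod n s))
    (h : ∀ i ∈ t, Good n s (F i)) : Good n s (∑ i ∈ t, F i) :=
  Finset.sum_induction F (Good n s) (fun _ _ ha hb => good_add ha hb) good_zero h

lemma good_mul {f g : Module.End ℂ (Vmod n s)} (hf : Good n s f) (hg : Good n s g) :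
    Good n s (f * g) := by
  obtain ⟨m₁, μ₁, P₁, hs₁, h₁⟩ := hf
  obtain ⟨m₂, μ₂, P₂, hs₂, h₂⟩ := hg
  refine ⟨m₁ * m₂,
    fun K => μ₁ (finProdFinEquiv.symm K).1 + μ₂ (finProdFinEquiv.symm K).2,
    fun K => (bind₁ (fun i => X i + C ((μ₂ (finProdFinEquiv.symm K).2 i : ℤ) : ℂ)))
        (P₁ (finProdFinEquiv.symm K).1) * P₂ (finProdFinEquiv.symm K).2, ?_, ?_⟩
  · intro K
    simp [Finset.sum_add_distrib, hs₁, hs₂]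
  · intro c
    rw [Module.End.mul_apply, h₂ c, map_sum]
    rw [← Equiv.sum_comp (finProdFinEquiv : Fin m₁ × Fin m₂ ≃ Fin (m₁ * m₂))]
    simp only [Equiv.symm_apply_apply]
    rw [Fintype.sum_prod_type]
    rw [Finset.sum_comm]
    apply Finset.sum_congr rfl; intro k₂ _
    rw [map_smul, h₁ (cshift (μ₂ k₂) c), Finset.smul_sum]
    apply Finset.sum_congr rfl; intro k₁ _
    rw [cshift_comp _ _ (hs₁ k₁) (hs₂ k₂)]
    rw [smul_smul, eval_mul, eval_bind₁']
    have hev : (eval fun i => eval c.1 (X i + C ((μ₂ k₂ i : ℤ) : ℂ))) (P₁ k₁)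
        = eval (cshift (μ₂ k₂) c).1 (P₁ k₁) := by
      rw [cshift_coe _ (hs₂ k₂)]
      apply congrArg (fun y => eval y (P₁ k₁))
      funext i
      simp
    rw [hev, mul_comm]

lemma trace_zero (x : sl (Fin (n+1)) ℂ) : ∑ i, x.1 i i = 0 := by
  have h : x.1 ∈ LinearMap.ker (Matrix.traceLinearMap (Fin (n+1)) ℂ ℂ) := x.2
  rw [LinearMap.mem_ker] at h
  have h2 : Matrix.trace x.1 = 0 := h
  rw [Matrix.trace] at h2
  exact h2

noncomputable def offElt (x : sl (Fin (n+1)) ℂ) (i j : Fin (n+1)) : sl (Fin (n+1)) ℂ :=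
  if h : i = j then 0 else (x.1 i j) • Eelt n i j h

lemma sl_decomp (x : sl (Fin (n+1)) ℂ) :
    x = Delt n (fun i => x.1 i i) (trace_zero x) + ∑ i, ∑ j, offElt x i j := by
  apply Subtype.ext
  have hsum : ((∑ i, ∑ j, offElt x i j : sl (Fin (n+1)) ℂ) : Matrix (Fin (n+1)) (Fin (n+1)) ℂ)
      = ∑ i, ∑ j, ((offElt x i j : sl (Fin (n+1)) ℂ) : Matrix (Fin (n+1)) (Fin (n+1)) ℂ) := by
    rw [AddSubmonoidClass.coe_finset_sum]
    exact Finset.sum_congr rfl fun i _ => AddSubmonoidClass.coe_finset_sum _ _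
  show x.1 = (Delt n (fun i => x.1 i i) (trace_zero x)).1 + _
  rw [hsum]
  funext a b
  have hoff : ∀ i j, ((offElt x i j : sl (Fin (n+1)) ℂ) : Matrix (Fin (n+1)) (Fin (n+1)) ℂ) a b
      = if i = a ∧ j = b ∧ i ≠ j then x.1 i j else 0 := by
    intro i j
    by_cases h1 : i = j
    · rw [offElt, dif_pos h1]
      have : ¬(i = a ∧ j = b ∧ i ≠ j) := by tauto
      simp [this]
    · rw [offElt, dif_neg h1]
      show (x.1 i j • (single i j h1 (1 : ℂ)).val) a b = _
      rw [val_single]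
      by_cases h2 : i = a ∧ j = b
      · obtain ⟨rfl, rfl⟩ := h2
        simp [Matrix.single, h1]
      · have h3 : ¬(i = a ∧ j = b ∧ i ≠ j) := by tauto
        simp only [Matrix.smul_apply, Matrix.single, Matrix.of_apply, if_neg h2,
          if_neg h3, smul_zero]
  show x.1 a b = (Matrix.diagonal (fun i => x.1 i i) + _) a b
  rw [Matrix.add_apply, Matrix.diagonal_apply, Matrix.sum_apply]
  have hrow : ∀ i, (∑ j, ((offElt x i j : sl (Fin (n+1)) ℂ) : Matrix (Fin (n+1)) (Fin (n+1)) ℂ)) a b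
      = ∑ j, (if i = a ∧ j = b ∧ i ≠ j then x.1 i j else 0) := by
    intro i
    rw [Matrix.sum_apply]
    exact Finset.sum_congr rfl fun j _ => hoff i j
  rw [Finset.sum_congr rfl (fun i _ => hrow i)]
  have hinner : ∑ i, ∑ j, (if i = a ∧ j = b ∧ i ≠ j then x.1 i j else 0)
      = if a ≠ b then x.1 a b else 0 := by
    rw [Finset.sum_eq_single a]
    · rw [Finset.sum_eq_single b]
      · by_cases hab : a = b <;> simp [hab]
      · intro j _ hj
        have : ¬(a = a ∧ j = b ∧ a ≠ j) := by tauto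
        rw [if_neg this]
      · simp
    · intro i _ hi
      apply Finset.sum_eq_zero
      intro j _
      have : ¬(i = a ∧ j = b ∧ i ≠ j) := by tauto
      rw [if_neg this]
    · simp
  rw [hinner]
  by_cases hab : a = b <;> simp [hab]

variable {ρ : sl (Fin (n + 1)) ℂ →ₗ⁅ℂ⁆ Module.End ℂ (Vmod n s)}

lemma good_gen_E (hρ : HasDefiningAction n s ρ) (i j : Fin (n+1)) (h : i ≠ j) :
    Good n s (ρ (Eelt n i j h)) := by
  refine ⟨1, fun _ => fun k => (if k = i then (1:ℤ) else 0) - (if k = j then 1 else 0),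
    fun _ => X j, ?_, ?_⟩
  · intro _
    simp [Finset.sum_sub_distrib]
  · intro c
    have hμ : ∑ k : Fin (n+1), ((if k = i then (1:ℤ) else 0) - (if k = j then 1 else 0)) = 0 := by
      simp [Finset.sum_sub_distrib]
    have hidx : shiftIdx i j c
        = cshift (fun k => (if k = i then (1:ℤ) else 0) - (if k = j then 1 else 0)) c := by
      apply Subtype.ext
      rw [cshift_coe _ hμ]
      funext k
      show c.1 k + (if k = i then (1:ℂ) else 0) - (if k = j then 1 else 0) = _
      have hcast : (((if k = i then (1:ℤ) else 0) - (if k = j then 1 else 0) : ℤ) : ℂ)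
          = (if k = i then (1:ℂ) else 0) - (if k = j then 1 else 0) := by
        split_ifs <;> norm_num
      rw [hcast]
      ring
    rw [hρ.1 i j h c, Fin.sum_univ_one, eval_X, hidx]

lemma good_gen_D (hρ : HasDefiningAction n s ρ) (d : Fin (n+1) → ℂ) (hd : ∑ i, d i = 0) :
    Good n s (ρ (Delt n d hd)) := by
  refine ⟨1, fun _ => 0, fun _ => ∑ i, C (d i) * X i, fun _ => by simp, ?_⟩
  intro c
  rw [hρ.2 d hd c, Fin.sum_univ_one, cshift_zero]
  congr 1
  rw [map_sum]
  apply Finset.sum_congr rfl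
  intro i _
  simp

lemma good_rho (hρ : HasDefiningAction n s ρ) (x : sl (Fin (n+1)) ℂ) :
    Good n s (ρ x) := by
  rw [sl_decomp x, map_add]
  apply good_add
  · exact good_gen_D hρ _ _
  · have h2 : ρ (∑ i, ∑ j, offElt x i j) = ∑ i, ∑ j, ρ (offElt x i j) := by
      rw [← LieHom.coe_toLinearMap, map_sum]
      exact Finset.sum_congr rfl fun i _ => map_sum _ _ _
    rw [h2]
    apply good_sum
    intro i _
    apply good_sum
    intro j _
    rw [offElt]
    by_cases h1 : i = j
    · rw [dif_pos h1, map_zero]; exact good_zero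
    · rw [dif_neg h1, map_smul]
      exact good_smul _ (good_gen_E hρ i j h1)

lemma good_lift (hρ : HasDefiningAction n s ρ)
    (u : UniversalEnvelopingAlgebra ℂ (sl (Fin (n + 1)) ℂ)) :
    Good n s ((UniversalEnvelopingAlgebra.lift ℂ ρ) u) := by
  obtain ⟨t, rfl⟩ : ∃ t, (UniversalEnvelopingAlgebra.mkAlgHom ℂ (sl (Fin (n+1)) ℂ)) t = u :=
    RingCon.mkₐ_surjective _ u
  induction t using TensorAlgebra.induction with
  | algebraMap r =>
    rw [AlgHom.commutes, AlgHom.commutes]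
    exact good_algebraMap r
  | ι x =>
    rw [UniversalEnvelopingAlgebra.lift_ι_apply']
    exact good_rho hρ x
  | mul a b ha hb =>
    rw [map_mul, map_mul]
    exact good_mul ha hb
  | add a b ha hb =>
    rw [map_add, map_add]
    exact good_add ha hb

lemma coeff_sum {m : ℕ} (x : Fin m → ℂ) (b : Fin m → Idx n s) (a : Idx n s)
    [DecidablePred fun k => b k = a] :
    (∑ k, x k • basisVec (b k)) a = ∑ k ∈ Finset.univ.filter (fun k => b k = a), x k := by
  rw [Finsupp.finset_sum_apply, Finset.sum_filter]
  apply Finset.sum_congr rfl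
  intro k _
  simp only [basisVec, Finsupp.smul_apply, Finsupp.single_apply, smul_eq_mul]
  split_ifs <;> simp

end Paper10

open Paper LieAlgebra.SpecialLinear in
/-- Fix `n ≥ 1` and `s ∈ ℂ`, and let `V` be the `sl_{n+1}(ℂ)`-module with basis
`{v_c : c ∈ ℂ^{n+1}, Σ c_i = s}` and action `E_{ij}·v_c = c_j·v_{c+e_i−e_j}` (for `i ≠ j`) and
`H·v_c = (Σ h_i c_i)·v_c` for traceless diagonal `H`.  If `u ∈ U(sl_{n+1}(ℂ))` lies in the
centralizer of the Cartan subalgebra `h` of traceless diagonal matrices, then there is a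
polynomial `P_u ∈ ℂ[X_1,…,X_{n+1}]` with `u·v_c = P_u(c_1,…,c_{n+1})·v_c` for every admissible
`c`.  In particular every weight space of `V` is `u`-stable and the trace of `u` on each
(one-dimensional) weight space depends polynomially on the weight, so `V` is a coherent family
of degree `1` in the sense of Mathieu. -/
theorem stmt10 (n : ℕ) (hn : 1 ≤ n) (s : ℂ)
    (ρ : sl (Fin (n + 1)) ℂ →ₗ⁅ℂ⁆ Module.End ℂ (Vmod n s))
    (hρ : HasDefiningAction n s ρ)
    (u : UniversalEnvelopingAlgebra ℂ (sl (Fin (n + 1)) ℂ))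
    (hu : ∀ (d : Fin (n + 1) → ℂ) (hd : ∑ i, d i = 0),
      UniversalEnvelopingAlgebra.ι ℂ (Delt n d hd) * u
        = u * UniversalEnvelopingAlgebra.ι ℂ (Delt n d hd)) :
    ∃ Pu : MvPolynomial (Fin (n + 1)) ℂ, ∀ c : Idx n s,
      (UniversalEnvelopingAlgebra.lift ℂ ρ) u (basisVec c)
        = (MvPolynomial.eval c.1 Pu) • basisVec c := by
  classical
  obtain ⟨m, μ, P, hs, hact⟩ := Paper10.good_lift hρ u
  -- Key cancellation: for each nonzero shift ν, the total coefficient vanishes.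
  have key : ∀ (ν : Fin (n+1) → ℤ), ν ≠ 0 → (∑ i, ν i = 0) → ∀ c : Idx n s,
      ∑ k ∈ Finset.univ.filter (fun k => μ k = ν), MvPolynomial.eval c.1 (P k) = 0 := by
    intro ν hν hνs c
    set d : Fin (n+1) → ℂ := fun i => (ν i : ℂ) with hd_def
    have hd : ∑ i, d i = 0 := by
      have : ((∑ i, ν i : ℤ) : ℂ) = 0 := by rw [hνs]; simp
      push_cast at this
      simpa [hd_def] using this
    have hcomm := hu d hd
    have h1 := congrArg (fun w => (UniversalEnvelopingAlgebra.lift ℂ ρ) w (basisVec c)) hcomm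
    simp only [map_mul, Module.End.mul_apply, UniversalEnvelopingAlgebra.lift_ι_apply] at h1
    rw [hρ.2 d hd c, map_smul, hact c, map_sum] at h1
    -- rewrite LHS termwise
    have hL : ∀ k, ρ (Delt n d hd) (MvPolynomial.eval c.1 (P k) • basisVec (Paper10.cshift (μ k) c))
        = (MvPolynomial.eval c.1 (P k) * (∑ i, d i * (Paper10.cshift (μ k) c).1 i)) •
            basisVec (Paper10.cshift (μ k) c) := by
      intro k
      rw [map_smul, hρ.2 d hd, smul_smul]
    rw [Finset.sum_congr rfl (fun k _ => hL k)] at h1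
    rw [Finset.smul_sum] at h1
    have hR : ∀ k, (∑ i, d i * c.1 i) • (MvPolynomial.eval c.1 (P k) • basisVec (Paper10.cshift (μ k) c))
        = (((∑ i, d i * c.1 i)) * MvPolynomial.eval c.1 (P k)) • basisVec (Paper10.cshift (μ k) c) :=
      fun k => by rw [smul_smul]
    rw [Finset.sum_congr rfl (fun k _ => hR k)] at h1
    have h2 := congrArg (fun w : Vmod n s => w (Paper10.cshift ν c)) h1
    simp only [Paper10.coeff_sum] at h2
    have hfil : Finset.univ.filter
          (fun k => Paper10.cshift (μ k) c = Paper10.cshift ν c)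
        = Finset.univ.filter (fun k => μ k = ν) := by
      apply Finset.filter_congr
      intro k _
      constructor
      · exact fun h => Paper10.cshift_inj _ _ (hs k) hνs c h
      · intro h; rw [h]
    rw [hfil] at h2
    -- on the filtered set, the inner scalar is constant
    have hAν : ∀ k ∈ Finset.univ.filter (fun k => μ k = ν),
        MvPolynomial.eval c.1 (P k) * (∑ i, d i * (Paper10.cshift (μ k) c).1 i)
        = MvPolynomial.eval c.1 (P k) * ((∑ i, d i * c.1 i) + ∑ i, ((ν i : ℂ))^2) := by
      intro k hk
      rw [Finset.mem_filter] at hk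
      rw [hk.2]
      congr 1
      rw [Paper10.cshift_coe _ hνs]
      rw [← Finset.sum_add_distrib]
      apply Finset.sum_congr rfl
      intro i _
      simp only [hd_def]
      ring
    rw [Finset.sum_congr rfl hAν] at h2
    rw [← Finset.sum_mul, ← Finset.mul_sum] at h2
    -- h2 : S * (A0 + Q) = A0 * S
    set S := ∑ k ∈ Finset.univ.filter (fun k => μ k = ν), MvPolynomial.eval c.1 (P k) with hS
    have hQ : (∑ i, ((ν i : ℂ))^2) ≠ 0 := by
      obtain ⟨i₀, hi₀⟩ : ∃ i₀, ν i₀ ≠ 0 := by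
        by_contra hcon
        push_neg at hcon
        exact hν (funext hcon)
      have hpos : 0 < ∑ i, (ν i)^2 := by
        apply Finset.sum_pos' (fun i _ => sq_nonneg _)
        exact ⟨i₀, Finset.mem_univ i₀, by positivity⟩
      have : ((∑ i, (ν i)^2 : ℤ) : ℂ) ≠ 0 := by
        exact_mod_cast hpos.ne'
      push_cast at this
      exact this
    have : S * (∑ i, ((ν i : ℂ))^2) = 0 := by linear_combination h2
    exact (mul_eq_zero.mp this).resolve_right hQ
  -- Now assemble the polynomial.
  refine ⟨∑ k ∈ Finset.univ.filter (fun k => μ k = 0), P k, fun c => ?_⟩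
  rw [hact c]
  rw [← Finset.sum_filter_add_sum_filter_not Finset.univ (fun k => μ k = 0)]
  have hfirst : ∑ k ∈ Finset.univ.filter (fun k => μ k = 0),
      MvPolynomial.eval c.1 (P k) • basisVec (Paper10.cshift (μ k) c)
      = (MvPolynomial.eval c.1 (∑ k ∈ Finset.univ.filter (fun k => μ k = 0), P k)) • basisVec c := by
    rw [map_sum, Finset.sum_smul]
    apply Finset.sum_congr rfl
    intro k hk
    rw [Finset.mem_filter] at hk
    rw [hk.2, Paper10.cshift_zero]
  have hsecond : ∑ k ∈ Finset.univ.filter (fun k => ¬ μ k = 0),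
      MvPolynomial.eval c.1 (P k) • basisVec (Paper10.cshift (μ k) c) = 0 := by
    rw [← Finset.sum_fiberwise_of_maps_to
      (fun k (hk : k ∈ Finset.univ.filter (fun k => ¬ μ k = 0)) => Finset.mem_image_of_mem μ hk)]
    apply Finset.sum_eq_zero
    intro ν hν
    rw [Finset.mem_image] at hν
    obtain ⟨k₀, hk₀, rfl⟩ := hν
    rw [Finset.mem_filter] at hk₀
    have hν0 : μ k₀ ≠ 0 := hk₀.2
    have hfil2 : (Finset.univ.filter (fun k => ¬ μ k = 0)).filter (fun k => μ k = μ k₀)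
        = Finset.univ.filter (fun k => μ k = μ k₀) := by
      rw [Finset.filter_filter]
      apply Finset.filter_congr
      intro k _
      constructor
      · exact fun h => h.2
      · exact fun h => ⟨h ▸ hν0, h⟩
    rw [hfil2]
    have hterm : ∀ k ∈ Finset.univ.filter (fun k => μ k = μ k₀),
        MvPolynomial.eval c.1 (P k) • basisVec (Paper10.cshift (μ k) c)
        = MvPolynomial.eval c.1 (P k) • basisVec (Paper10.cshift (μ k₀) c) := by
      intro k hk
      rw [Finset.mem_filter] at hk
      rw [hk.2]
    rw [Finset.sum_congr rfl hterm, ← Finset.sum_smul, key (μ k₀) hν0 (hs k₀) c, zero_smul]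
  rw [hfirst, hsecond, add_zero]
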